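/- If (σ*, τ*) is a mixed Nash equilibrium of the restricted game on nonempty subsets Π_r ⊆ ι, Π_c ⊆ κ, and a full-game best response to τ* already lies in Π_r (i.e., max over i in ι of ∑ j, τ* j * U i j = max over i in Π_r of ∑ j, τ* j * U i j) and a full-game best response to σ* already lies in Π_c (i.e., min over j in κ of ∑ i, σ* i * U i j = min over j in Π_c of ∑ i, σ* i * U i j), then (σ*, τ*) is a mixed Nash equilibrium of the full game. -/

import Mathlib

open Finset

/-- Expected payoff of the matrix game `U` under mixed strategies `σ` and `τ`. -/
def pay {ι κ : Type*} [Fintype ι] [Fintype κ] (U : ι → κ → ℝ) (σ : ι → ℝ) (τ : κ → ℝ) : ℝ :=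
  ∑ i, ∑ j, σ i * τ j * U i j

/-- `(σ, τ)` is a mixed Nash equilibrium of the zero-sum matrix game `U`. -/
def isNE {ι κ : Type*} [Fintype ι] [Fintype κ] (U : ι → κ → ℝ) (σ : ι → ℝ) (τ : κ → ℝ) : Prop :=
  σ ∈ stdSimplex ℝ ι ∧ τ ∈ stdSimplex ℝ κ ∧
    (∀ σ' ∈ stdSimplex ℝ ι, pay U σ' τ ≤ pay U σ τ) ∧
    (∀ τ' ∈ stdSimplex ℝ κ, pay U σ τ ≤ pay U σ τ')

/- A convex combination of the pure payoffs never exceeds the best pure payoff, so it suffices to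
bound the pure deviations. By hypothesis the best pure deviation already lies in the restricted
set, and a pure strategy there is an admissible deviation in the restricted game, hence is no
better than the restricted equilibrium. The column player is symmetric. -/

lemma single_eq_zero_of_notMem {ι : Type*} [DecidableEq ι] {P : Finset ι} {i : ι} (hi : i ∈ P) :
    ∀ i' ∉ P, (Pi.single i 1 : ι → ℝ) i' = 0 :=
  fun _ hi' => Pi.single_eq_of_ne (ne_of_mem_of_not_mem hi hi').symm _

section StdSimplex

variable {ι : Type*} [Fintype ι] {w f : ι → ℝ} {c : ℝ}

lemma sum_mul_le_of_mem_stdSimplex (hw : w ∈ stdSimplex ℝ ι) (hf : ∀ i, f i ≤ c) :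
    ∑ i, w i * f i ≤ c :=
  calc ∑ i, w i * f i ≤ ∑ i, w i * c :=
        sum_le_sum fun i _ => mul_le_mul_of_nonneg_left (hf i) (hw.1 i)
    _ = c := by rw [← sum_mul, hw.2, one_mul]

lemma le_sum_mul_of_mem_stdSimplex (hw : w ∈ stdSimplex ℝ ι) (hf : ∀ i, c ≤ f i) :
    c ≤ ∑ i, w i * f i :=
  calc c = ∑ i, w i * c := by rw [← sum_mul, hw.2, one_mul]
    _ ≤ ∑ i, w i * f i :=
        sum_le_sum fun i _ => mul_le_mul_of_nonneg_left (hf i) (hw.1 i)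

end StdSimplex

section Payoff

variable {ι κ : Type*} [Fintype ι] [Fintype κ] (U : ι → κ → ℝ)

lemma pay_eq_sum_row (σ : ι → ℝ) (τ : κ → ℝ) :
    pay U σ τ = ∑ i, σ i * ∑ j, τ j * U i j := by
  simp only [pay, mul_sum, mul_left_comm (σ _), mul_assoc]

lemma pay_eq_sum_col (σ : ι → ℝ) (τ : κ → ℝ) :
    pay U σ τ = ∑ j, τ j * ∑ i, σ i * U i j := by
  rw [pay, sum_comm]
  simp only [mul_sum, mul_left_comm (τ _), mul_assoc]

lemma pay_single_left [DecidableEq ι] (i : ι) (τ : κ → ℝ) :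
    pay U (Pi.single i 1) τ = ∑ j, τ j * U i j := by
  simp [pay_eq_sum_row, Pi.single_apply]

lemma pay_single_right [DecidableEq κ] (σ : ι → ℝ) (j : κ) :
    pay U σ (Pi.single j 1) = ∑ i, σ i * U i j := by
  simp [pay_eq_sum_col, Pi.single_apply]

end Payoff

theorem double_oracle_no_new_best_response_general {ι κ : Type*}
    [Fintype ι] [Fintype κ] [Nonempty ι] [Nonempty κ] (U : ι → κ → ℝ)
    (Pr : Finset ι) (Pc : Finset κ) (hr : Pr.Nonempty) (hc : Pc.Nonempty)
    (σs : ι → ℝ) (τs : κ → ℝ)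
    (hσ : σs ∈ stdSimplex ℝ ι) (hτ : τs ∈ stdSimplex ℝ κ)
    (hRestrNE_r : ∀ σ ∈ stdSimplex ℝ ι, (∀ i ∉ Pr, σ i = 0) → pay U σ τs ≤ pay U σs τs)
    (hRestrNE_c : ∀ τ ∈ stdSimplex ℝ κ, (∀ j ∉ Pc, τ j = 0) → pay U σs τs ≤ pay U σs τ)
    (hBR_r : Finset.univ.sup' Finset.univ_nonempty (fun i => ∑ j, τs j * U i j) =
      Pr.sup' hr (fun i => ∑ j, τs j * U i j))
    (hBR_c : Finset.univ.inf' Finset.univ_nonempty (fun j => ∑ i, σs i * U i j) =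
      Pc.inf' hc (fun j => ∑ i, σs i * U i j)) :
    isNE U σs τs := by
  classical
  have pure_row : ∀ i ∈ Pr, ∑ j, τs j * U i j ≤ pay U σs τs := fun i hi =>
    pay_single_left U i τs ▸
      hRestrNE_r _ (single_mem_stdSimplex ℝ i) (single_eq_zero_of_notMem hi)
  have pure_col : ∀ j ∈ Pc, pay U σs τs ≤ ∑ i, σs i * U i j := fun j hj =>
    pay_single_right U σs j ▸
      hRestrNE_c _ (single_mem_stdSimplex ℝ j) (single_eq_zero_of_notMem hj)
  refine ⟨hσ, hτ, fun σ hσ' => ?_, fun τ hτ' => ?_⟩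
  · rw [pay_eq_sum_row U σ τs]
    exact sum_mul_le_of_mem_stdSimplex hσ' fun i =>
      (le_sup' _ (mem_univ i)).trans (hBR_r ▸ sup'_le hr _ pure_row)
  · rw [pay_eq_sum_col U σs τ]
    exact le_sum_mul_of_mem_stdSimplex hτ' fun j =>
      (hBR_c ▸ le_inf' hc _ pure_col).trans (inf'_le _ (mem_univ j))

/-- Classical termination guarantee of the double oracle algorithm (McMahan et al.): if
`(σ*, τ*)` is a mixed Nash equilibrium of the restricted game on `Pr`, `Pc` and the
full-game best responses to `τ*` and `σ*` already lie in `Pr` and `Pc` respectively, then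
`(σ*, τ*)` is a mixed Nash equilibrium of the full game. -/
theorem double_oracle_no_new_best_response {ι κ : Type*}
    [Fintype ι] [Fintype κ] [Nonempty ι] [Nonempty κ] (U : ι → κ → ℝ)
    (Pr : Finset ι) (Pc : Finset κ) (hr : Pr.Nonempty) (hc : Pc.Nonempty)
    (σs : ι → ℝ) (τs : κ → ℝ)
    (hσ : σs ∈ stdSimplex ℝ ι) (hτ : τs ∈ stdSimplex ℝ κ)
    (hσsupp : ∀ i ∉ Pr, σs i = 0) (hτsupp : ∀ j ∉ Pc, τs j = 0)
    (hRestrNE_r : ∀ σ ∈ stdSimplex ℝ ι, (∀ i ∉ Pr, σ i = 0) → pay U σ τs ≤ pay U σs τs)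
    (hRestrNE_c : ∀ τ ∈ stdSimplex ℝ κ, (∀ j ∉ Pc, τ j = 0) → pay U σs τs ≤ pay U σs τ)
    (hBR_r : Finset.univ.sup' Finset.univ_nonempty (fun i => ∑ j, τs j * U i j) =
      Pr.sup' hr (fun i => ∑ j, τs j * U i j))
    (hBR_c : Finset.univ.inf' Finset.univ_nonempty (fun j => ∑ i, σs i * U i j) =
      Pc.inf' hc (fun j => ∑ i, σs i * U i j)) :
    isNE U σs τs :=
  double_oracle_no_new_best_response_general U Pr Pc hr hc σs τs hσ hτ hRestrNE_r hRestrNE_c hBR_r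
    hBR_c
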